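/- Let G be a finite connected simple graph with real edge weights that are pairwise distinct, let T be its (unique) minimum spanning tree, and let P be the Prim order of G with an arbitrary seed vertex. Let e_max = (v_i, v_j) be the edge of T of maximum weight, and set P(e_max) = max(P(v_i), P(v_j)). Then deleting e_max from T leaves exactly two connected components T_L and T_R, and their edge sets are E_L = {e ∈ E_T : P(e) < P(e_max)} and E_R = {e ∈ E_T : P(e) > P(e_max)}, where E_T is the edge set of T. -/

import Mathlib

open SimpleGraph

variable {V : Type*}

/-- `P` is a Prim order of the graph `H` restricted to the vertex set `S`, with seed `v₀`:
`P` maps `S` bijectively onto `{1, …, |S|}`, `P v₀ = 1`, and each vertex other than the seed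
is joined to an earlier vertex by an edge of minimum weight among all edges of `H` (within `S`)
from the earlier vertices to the later ones. -/
def IsPrimOrderOn (H : SimpleGraph V) (w : Sym2 V → ℝ)
    (S : Set V) (v₀ : V) (P : V → ℕ) : Prop :=
  v₀ ∈ S ∧ P v₀ = 1 ∧ Set.BijOn P S (Set.Icc 1 S.ncard) ∧
    ∀ v ∈ S, P v ≠ 1 →
      ∃ u ∈ S, P u < P v ∧ H.Adj u v ∧
        ∀ x ∈ S, ∀ y ∈ S, P x < P v → P v ≤ P y → H.Adj x y →
          w s(u, v) ≤ w s(x, y)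

/-- Total edge weight of a graph on a finite vertex type. -/
noncomputable def totalWeight [Fintype V] (H : SimpleGraph V) (w : Sym2 V → ℝ) : ℝ :=
  ∑ e ∈ H.edgeSet.toFinite.toFinset, w e

/-- `H` is a tree on the vertex set `S`: all its edges lie within `S`, any two vertices of `S`
are joined by a path, and `H` is acyclic. -/
def IsTreeOn (H : SimpleGraph V) (S : Set V) : Prop :=
  (∀ e ∈ H.edgeSet, ∀ v ∈ e, v ∈ S) ∧ (∀ u ∈ S, ∀ v ∈ S, H.Reachable u v) ∧ H.IsAcyclic

/-- `T` is a minimum spanning tree of `G` on the vertex set `S`. -/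
def IsMSTOn [Fintype V] (G : SimpleGraph V) (w : Sym2 V → ℝ) (S : Set V)
    (T : SimpleGraph V) : Prop :=
  T ≤ G ∧ IsTreeOn T S ∧
    ∀ T' : SimpleGraph V, T' ≤ G → IsTreeOn T' S → totalWeight T w ≤ totalWeight T' w

/-- Restriction of a graph to the edges with both endpoints in `S`. -/
def restrictTo (H : SimpleGraph V) (S : Set V) : SimpleGraph V where
  Adj a b := H.Adj a b ∧ a ∈ S ∧ b ∈ S
  symm := ⟨fun a b ⟨h, ha, hb⟩ => ⟨h.symm, hb, ha⟩⟩
  loopless := ⟨fun a ⟨h, _, _⟩ => H.irrefl h⟩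

/-- Prim order of an edge: the larger of the Prim orders of its endpoints. -/
def edgeOrder (P : V → ℕ) : Sym2 V → ℕ :=
  Sym2.lift ⟨fun u v => max (P u) (P v), fun u v => max_comm _ _⟩

/-! Each vertex `z` other than the seed has a Prim parent `u z`: `s(u z, z)` is the lightest edge
from the vertices before `z` to the rest, so by the cut property it lies in the MST `T`. These
`n - 1` edges are distinct, hence they are all of `T`, and `s(u z, z)` has Prim order `P z`.
Write `e_max = s(u b, b)`. No vertex `z` after `b` has its parent before `b`: then `s(u z, z)`
would cross the cut in front of `b`, so it would be at least as heavy as `e_max`, hence equal to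
it. Thus, after deleting `e_max`, following parents joins every vertex before `b` to the seed and
every other vertex to `b`, while no remaining edge joins the two sets. -/

lemma isTreeOn_univ_iff [Nonempty V] {H : SimpleGraph V} : IsTreeOn H Set.univ ↔ H.IsTree :=
  ⟨fun ⟨_, hreach, hacyc⟩ => ⟨⟨fun u v => hreach u trivial v trivial⟩, hacyc⟩,
    fun h => ⟨fun _ _ _ _ => trivial, fun u _ v _ => h.connected u v, h.isAcyclic⟩⟩

section Exchange

variable {T T' : SimpleGraph V} {e e' : Sym2 V}

lemma ncard_edgeSet_of_eq_insert_sdiff [Finite V] (he : e ∈ T.edgeSet) (he' : e' ∉ T.edgeSet)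
    (h : T'.edgeSet = insert e' (T.edgeSet \ {e})) : T'.edgeSet.ncard = T.edgeSet.ncard := by
  rw [h, Set.ncard_insert_of_notMem (fun h' => he' h'.1), Set.ncard_sdiff_singleton_add_one he]

lemma totalWeight_of_eq_insert_sdiff [Fintype V] (w : Sym2 V → ℝ) (he : e ∈ T.edgeSet)
    (he' : e' ∉ T.edgeSet)
    (h : T'.edgeSet = insert e' (T.edgeSet \ {e})) :
    totalWeight T' w = totalWeight T w - w e + w e' := by
  classical
  have hfin : T'.edgeSet.toFinite.toFinset = insert e' (T.edgeSet.toFinite.toFinset.erase e) := by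
    ext x
    simp only [h, Set.Finite.mem_toFinset, Finset.mem_insert, Finset.mem_erase, Set.mem_insert_iff,
      Set.mem_sdiff, Set.mem_singleton_iff]
    tauto
  rw [totalWeight, totalWeight, hfin, Finset.sum_insert (by simpa using fun _ => he'),
    Finset.sum_erase_eq_sub (by simpa using he)]
  ring

end Exchange

theorem IsMSTOn.mem_edgeSet_of_lightest_cut_edge [Fintype V] {G T : SimpleGraph V}
    {w : Sym2 V → ℝ} (hdistinct : Set.InjOn w G.edgeSet) (hT : IsMSTOn G w Set.univ T)
    {S : Set V} {u v : V} (hu : u ∈ S) (hv : v ∉ S) (huv : G.Adj u v)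
    (hmin : ∀ x ∈ S, ∀ y ∉ S, G.Adj x y → w s(u, v) ≤ w s(x, y)) :
    s(u, v) ∈ T.edgeSet := by
  have : Nonempty V := ⟨u⟩
  obtain ⟨hTG, hTtree, hTmin⟩ := hT
  rw [isTreeOn_univ_iff] at hTtree
  by_contra huvT
  obtain ⟨p, hp⟩ := hTtree.connected.exists_isPath u v
  obtain ⟨⟨⟨x, y⟩, hxy⟩, hd, hx, hy⟩ := p.exists_boundary_dart S hu hv
  have hxyp : s(x, y) ∈ p.edges := List.mem_map_of_mem hd
  have hne : s(u, v) ≠ s(x, y) := fun h => huvT (h ▸ hxy)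
  set H := T ⊔ edge u v
  -- `s(x, y)` lies on the cycle formed by `p` and the new edge, so it is not a bridge of `H`
  have hcycle := Path.cons_isCycle ⟨p.mapLe (le_sup_left : T ≤ H), hp.mapLe _⟩
    (show H.Adj v u from Or.inr (by simp [edge_adj, huv.ne']))
    (by simpa [Walk.edges_mapLe_eq_edges, Sym2.eq_swap] using
      fun h => huvT (p.edges_subset_edgeSet h))
  have hbridge : ¬ H.IsBridge s(x, y) := fun h => h.notMem_edges_of_isCycle hcycle (by
    simp [hxyp])
  set T' := H.deleteEdges {s(x, y)}
  have hedges : T'.edgeSet = insert s(u, v) (T.edgeSet \ {s(x, y)}) := by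
    rw [edgeSet_deleteEdges, edgeSet_sup, edgeSet_edge_of_ne huv.ne, Set.union_singleton,
      Set.insert_sdiff_of_notMem _ (Set.notMem_singleton_iff.mpr hne)]
  have hT'G : T' ≤ G :=
    (deleteEdges_le _).trans (sup_le hTG ((edge_le_iff G).mpr (Or.inr huv)))
  have hT'tree : T'.IsTree := by
    rw [isTree_iff_connected_and_card, Nat.card_coe_set_eq,
      ncard_edgeSet_of_eq_insert_sdiff (p.edges_subset_edgeSet hxyp) huvT hedges,
      ← Nat.card_coe_set_eq]
    exact ⟨(hTtree.connected.mono le_sup_left).connected_delete_edge_of_not_isBridge hbridge,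
      (isTree_iff_connected_and_card.mp hTtree).2⟩
  have hlt : w s(u, v) < w s(x, y) :=
    (hmin x hx y hy (hTG hxy)).lt_of_ne fun h => hne (hdistinct huv (hTG hxy) h)
  have hle := hTmin T' hT'G (isTreeOn_univ_iff.mpr hT'tree)
  rw [totalWeight_of_eq_insert_sdiff w (p.edges_subset_edgeSet hxyp) huvT hedges] at hle
  linarith

lemma edgeOrder_mk (P : V → ℕ) (u v : V) : edgeOrder P s(u, v) = max (P u) (P v) := rfl

lemma edgeOrder_mk_of_lt {P : V → ℕ} {u v : V} (h : P u < P v) : edgeOrder P s(u, v) = P v :=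
  max_eq_right h.le

structure IsPrimParent (H : SimpleGraph V) (w : Sym2 V → ℝ) (P : V → ℕ) (u z : V) : Prop where
  lt : P u < P z
  adj : H.Adj u z
  le : ∀ x y, P x < P z → P z ≤ P y → H.Adj x y → w s(u, z) ≤ w s(x, y)

namespace IsPrimOrderOn

variable {H : SimpleGraph V} {w : Sym2 V → ℝ} {v₀ : V} {P : V → ℕ}

lemma injective (hP : IsPrimOrderOn H w Set.univ v₀ P) : Function.Injective P :=
  Set.injOn_univ.mp hP.2.2.1.injOn

lemma apply_seed_le (hP : IsPrimOrderOn H w Set.univ v₀ P) (z : V) : P v₀ ≤ P z :=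
  hP.2.1 ▸ (hP.2.2.1.mapsTo trivial).1

lemma exists_isPrimParent (hP : IsPrimOrderOn H w Set.univ v₀ P) {z : V} (hz : z ≠ v₀) :
    ∃ u, IsPrimParent H w P u z := by
  obtain ⟨u, -, hlt, hadj, hle⟩ :=
    hP.2.2.2 z trivial fun h => hz (hP.injective (h.trans hP.2.1.symm))
  exact ⟨u, hlt, hadj, fun x y => hle x trivial y trivial⟩

end IsPrimOrderOn

namespace IsPrimParent

variable {G : SimpleGraph V} {w : Sym2 V → ℝ} {P : V → ℕ}

lemma mem_edgeSet [Fintype V] {T : SimpleGraph V} {u z : V} (h : IsPrimParent G w P u z)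
    (hdistinct : Set.InjOn w G.edgeSet) (hT : IsMSTOn G w Set.univ T) : s(u, z) ∈ T.edgeSet :=
  hT.mem_edgeSet_of_lightest_cut_edge hdistinct (S := {x | P x < P z}) h.lt (lt_irrefl (P z)) h.adj
    fun x hx y hy => h.le x y hx (not_lt.mp hy)

/-- Otherwise `s(uz, z)` would cross the cut in front of `b`, whose lightest edge is `s(ub, b)`. -/
lemma le_parent_of_weight_le (hdistinct : Set.InjOn w G.edgeSet) {ub b uz z : V}
    (hb : IsPrimParent G w P ub b) (hz : IsPrimParent G w P uz z)
    (hw : w s(uz, z) ≤ w s(ub, b)) (hlt : P b < P z) : P b ≤ P uz := by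
  by_contra! h
  have heq : s(uz, z) = s(ub, b) :=
    hdistinct hz.adj hb.adj (hw.antisymm (hb.le uz z h hlt.le hz.adj))
  have := congrArg (edgeOrder P) heq
  rw [edgeOrder_mk_of_lt hz.lt, edgeOrder_mk_of_lt hb.lt] at this
  omega

end IsPrimParent

namespace SimpleGraph

lemma IsTree.edgeSet_eq_image_parent [Finite V] {T : SimpleGraph V} (hT : T.IsTree)
    {P : V → ℕ} {f : V → V} {r : V} (hf : ∀ z ≠ r, P (f z) < P z)
    (hfT : ∀ z ≠ r, s(f z, z) ∈ T.edgeSet) :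
    T.edgeSet = (fun z => s(f z, z)) '' {r}ᶜ := by
  have hinj : Set.InjOn (fun z => s(f z, z)) {r}ᶜ := by
    intro z hz z' hz' h
    rcases Sym2.eq_iff.mp h with ⟨-, h⟩ | ⟨h₁, h₂⟩
    · exact h
    · have h₁' := hf z hz
      have h₂' := hf z' hz'
      rw [h₁] at h₁'
      rw [← h₂] at h₂'
      omega
  symm
  refine Set.eq_of_subset_of_ncard_le (Set.image_subset_iff.mpr hfT) ?_
  have hcard := (isTree_iff_connected_and_card.mp hT).2
  rw [hinj.ncard_image, Set.ncard_compl, Set.ncard_singleton, ← Nat.card_coe_set_eq]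
  omega

lemma reachable_of_parent {D : SimpleGraph V} {P : V → ℕ} {f : V → V} {S : Set V} {c : V}
    (h : ∀ z ∈ S, z ≠ c → f z ∈ S ∧ P (f z) < P z ∧ D.Adj (f z) z) :
    ∀ z ∈ S, D.Reachable z c := by
  intro z
  induction hn : P z using Nat.strong_induction_on generalizing z with
  | _ n ih =>
    intro hz
    by_cases hzc : z = c
    · exact hzc ▸ Reachable.refl z
    obtain ⟨hfS, hlt, hadj⟩ := h z hz hzc
    exact hadj.symm.reachable.trans (ih _ (hn ▸ hlt) _ rfl hfS)

section Components

variable {D : SimpleGraph V} {S : Set V} {a b : V}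

lemma supp_connectedComponentMk_eq (hS : ∀ x y, D.Adj x y → (x ∈ S ↔ y ∈ S)) (ha : a ∈ S)
    (hreach : ∀ z ∈ S, D.Reachable z a) : (D.connectedComponentMk a).supp = S := by
  ext z
  rw [ConnectedComponent.mem_supp_iff, ConnectedComponent.eq]
  refine ⟨fun ⟨p⟩ => by_contra fun hz => ?_, hreach z⟩
  obtain ⟨d, -, hd₁, hd₂⟩ := p.reverse.exists_boundary_dart S ha hz
  exact hd₂ ((hS _ _ d.adj).mp hd₁)

theorem exists_connectedComponents_supp_eq_and_compl (hS : ∀ x y, D.Adj x y → (x ∈ S ↔ y ∈ S))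
    (ha : a ∈ S) (hb : b ∉ S) (hreach_a : ∀ z ∈ S, D.Reachable z a)
    (hreach_b : ∀ z ∉ S, D.Reachable z b) :
    ∃ cL cR : D.ConnectedComponent,
      cL ≠ cR ∧ (∀ c, c = cL ∨ c = cR) ∧ cL.supp = S ∧ cR.supp = Sᶜ := by
  have hL := supp_connectedComponentMk_eq hS ha hreach_a
  have hR := supp_connectedComponentMk_eq (fun x y h => not_congr (hS x y h)) hb hreach_b
  refine ⟨D.connectedComponentMk a, D.connectedComponentMk b, fun h => ?_, fun c => ?_, hL, hR⟩
  · have : a ∈ (D.connectedComponentMk b).supp := h ▸ ConnectedComponent.connectedComponentMk_mem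
    exact (hR ▸ this) ha
  · induction c using ConnectedComponent.ind with | h z => ?_
    by_cases hz : z ∈ S
    · exact .inl (ConnectedComponent.sound (hreach_a z hz))
    · exact .inr (ConnectedComponent.sound (hreach_b z hz))

end Components

end SimpleGraph

structure IsParentTree (T : SimpleGraph V) (P : V → ℕ) (f : V → V) (r : V) : Prop where
  injective : Function.Injective P
  root_le : ∀ z, P r ≤ P z
  parent_lt : ∀ z ≠ r, P (f z) < P z
  edgeSet_eq : T.edgeSet = (fun z => s(f z, z)) '' {r}ᶜ

namespace IsParentTree

variable {T : SimpleGraph V} {P : V → ℕ} {f : V → V} {r b : V}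

lemma parent_mem_edgeSet (hT : IsParentTree T P f r) {z : V} (hz : z ≠ r) :
    s(f z, z) ∈ T.edgeSet :=
  hT.edgeSet_eq ▸ ⟨z, hz, rfl⟩

lemma edgeOrder_injOn (hT : IsParentTree T P f r) : Set.InjOn (edgeOrder P) T.edgeSet := by
  rw [hT.edgeSet_eq]
  rintro _ ⟨z, hz, rfl⟩ _ ⟨z', hz', rfl⟩ h
  rw [edgeOrder_mk_of_lt (hT.parent_lt z hz), edgeOrder_mk_of_lt (hT.parent_lt z' hz')] at h
  rw [hT.injective h]

lemma mem_edgeSet_deleteEdges_iff (hT : IsParentTree T P f r) (hb : b ≠ r) {e : Sym2 V}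
    (he : e ∈ T.edgeSet) :
    e ∈ (T.deleteEdges {s(f b, b)}).edgeSet ↔ edgeOrder P e ≠ P b := by
  rw [edgeSet_deleteEdges, ← edgeOrder_mk_of_lt (hT.parent_lt b hb)]
  exact ⟨fun h h' => h.2 (hT.edgeOrder_injOn he (hT.parent_mem_edgeSet hb) h'),
    fun h => ⟨he, fun h' => h (h' ▸ rfl)⟩⟩

lemma le_of_lt_edgeOrder (hT : IsParentTree T P f r) (hcut : ∀ z, P b < P z → P b ≤ P (f z))
    {e : Sym2 V} (he : e ∈ T.edgeSet) (hlt : P b < edgeOrder P e) : ∀ v ∈ e, P b ≤ P v := by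
  rw [hT.edgeSet_eq] at he
  obtain ⟨z, hz, rfl⟩ := he
  rw [edgeOrder_mk_of_lt (hT.parent_lt z hz)] at hlt
  intro v hv
  rcases Sym2.mem_iff.mp hv with rfl | rfl
  exacts [hcut z hlt, hlt.le]

lemma parent_adj_deleteEdges (hT : IsParentTree T P f r) (hb : b ≠ r) {z : V} (hz : z ≠ r)
    (hzb : P z ≠ P b) : (T.deleteEdges {s(f b, b)}).Adj (f z) z :=
  (hT.mem_edgeSet_deleteEdges_iff hb (hT.parent_mem_edgeSet hz)).mpr
    (edgeOrder_mk_of_lt (hT.parent_lt z hz) ▸ hzb)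

lemma lt_iff_of_adj_deleteEdges (hT : IsParentTree T P f r) (hb : b ≠ r)
    (hcut : ∀ z, P b < P z → P b ≤ P (f z)) {x y : V}
    (h : (T.deleteEdges {s(f b, b)}).Adj x y) : P x < P b ↔ P y < P b := by
  have he : s(x, y) ∈ T.edgeSet := deleteEdges_le _ h
  rcases ((hT.mem_edgeSet_deleteEdges_iff hb he).mp h).lt_or_gt with hlt | hlt
  · rw [edgeOrder_mk, max_lt_iff] at hlt
    exact iff_of_true hlt.1 hlt.2
  · have hle := hT.le_of_lt_edgeOrder hcut he hlt
    exact iff_of_false (hle x (Sym2.mem_mk_left x y)).not_gt (hle y (Sym2.mem_mk_right x y)).not_gt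

lemma reachable_root (hT : IsParentTree T P f r) (hb : b ≠ r) {z : V} (hz : P z < P b) :
    (T.deleteEdges {s(f b, b)}).Reachable z r :=
  reachable_of_parent (S := {z | P z < P b}) (fun z hz hzr =>
    ⟨(hT.parent_lt z hzr).trans hz, hT.parent_lt z hzr, hT.parent_adj_deleteEdges hb hzr hz.ne⟩)
    z hz

lemma reachable_of_le (hT : IsParentTree T P f r) (hb : b ≠ r)
    (hcut : ∀ z, P b < P z → P b ≤ P (f z)) {z : V} (hz : P b ≤ P z) :
    (T.deleteEdges {s(f b, b)}).Reachable z b := by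
  refine reachable_of_parent (P := P) (f := f) (S := {z | P b ≤ P z}) (fun z hz hzb => ?_) z hz
  have hlt : P b < P z := hz.lt_of_ne fun h => hzb (hT.injective h).symm
  have hzr : z ≠ r := by rintro rfl; exact (hT.root_le b).not_gt hlt
  exact ⟨hcut z hlt, hT.parent_lt z hzr, hT.parent_adj_deleteEdges hb hzr hlt.ne'⟩

lemma edgeSet_restrictTo_lt (hT : IsParentTree T P f r) (hb : b ≠ r) :
    (restrictTo (T.deleteEdges {s(f b, b)}) {z | P z < P b}).edgeSet
      = {e ∈ T.edgeSet | edgeOrder P e < P b} := by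
  ext e
  induction e using Sym2.ind with | h x y => ?_
  refine ⟨fun ⟨h, hx, hy⟩ => ⟨deleteEdges_le _ h, max_lt hx hy⟩, fun ⟨he, hlt⟩ => ?_⟩
  rw [edgeOrder_mk, max_lt_iff] at hlt
  exact ⟨(hT.mem_edgeSet_deleteEdges_iff hb he).mpr (max_lt hlt.1 hlt.2).ne, hlt⟩

lemma edgeSet_restrictTo_compl (hT : IsParentTree T P f r) (hb : b ≠ r)
    (hcut : ∀ z, P b < P z → P b ≤ P (f z)) :
    (restrictTo (T.deleteEdges {s(f b, b)}) {z | P z < P b}ᶜ).edgeSet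
      = {e ∈ T.edgeSet | P b < edgeOrder P e} := by
  ext e
  induction e using Sym2.ind with | h x y => ?_
  constructor
  · rintro ⟨h, hx, -⟩
    have he : s(x, y) ∈ T.edgeSet := deleteEdges_le _ h
    refine ⟨he, lt_of_le_of_ne ?_ ((hT.mem_edgeSet_deleteEdges_iff hb he).mp h).symm⟩
    exact le_max_of_le_left (not_lt.mp hx)
  · rintro ⟨he, hlt⟩
    have hle := hT.le_of_lt_edgeOrder hcut he hlt
    exact ⟨(hT.mem_edgeSet_deleteEdges_iff hb he).mpr hlt.ne',
      (hle x (Sym2.mem_mk_left x y)).not_gt, (hle y (Sym2.mem_mk_right x y)).not_gt⟩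

theorem exists_connectedComponents_deleteEdges (hT : IsParentTree T P f r) (hb : b ≠ r)
    (hcut : ∀ z, P b < P z → P b ≤ P (f z)) :
    ∃ cL cR : (T.deleteEdges {s(f b, b)}).ConnectedComponent,
      cL ≠ cR ∧ (∀ c, c = cL ∨ c = cR) ∧
      (restrictTo (T.deleteEdges {s(f b, b)}) cL.supp).edgeSet
        = {e ∈ T.edgeSet | edgeOrder P e < P b} ∧
      (restrictTo (T.deleteEdges {s(f b, b)}) cR.supp).edgeSet
        = {e ∈ T.edgeSet | P b < edgeOrder P e} := by
  have hrb : P r < P b := (hT.root_le b).lt_of_ne fun h => hb (hT.injective h).symm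
  obtain ⟨cL, cR, hne, hall, hL, hR⟩ := exists_connectedComponents_supp_eq_and_compl
    (fun x y h => hT.lt_iff_of_adj_deleteEdges hb hcut h) hrb (lt_irrefl (P b))
    (fun _ => hT.reachable_root hb) fun _ hz => hT.reachable_of_le hb hcut (le_of_not_gt hz)
  exact ⟨cL, cR, hne, hall, hL ▸ hT.edgeSet_restrictTo_lt hb,
    hR ▸ hT.edgeSet_restrictTo_compl hb hcut⟩

end IsParentTree

theorem edge_sets_after_breaking_longest_mst_edge_general {V : Type*} [Fintype V] (G T : SimpleGraph V) (w : Sym2 V → ℝ)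
    (hdistinct : Set.InjOn w G.edgeSet)
    (hT : IsMSTOn G w Set.univ T) (v₀ : V) (P : V → ℕ)
    (hP : IsPrimOrderOn G w Set.univ v₀ P)
    (vi vj : V) (hmem : s(vi, vj) ∈ T.edgeSet)
    (hmax : ∀ e ∈ T.edgeSet, w e ≤ w s(vi, vj)) :
    ∃ cL cR : (T.deleteEdges {s(vi, vj)}).ConnectedComponent,
      cL ≠ cR ∧ (∀ c, c = cL ∨ c = cR) ∧
      (restrictTo (T.deleteEdges {s(vi, vj)}) cL.supp).edgeSet
        = {e ∈ T.edgeSet | edgeOrder P e < edgeOrder P s(vi, vj)} ∧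
      (restrictTo (T.deleteEdges {s(vi, vj)}) cR.supp).edgeSet
        = {e ∈ T.edgeSet | edgeOrder P s(vi, vj) < edgeOrder P e} := by
  have : Nonempty V := ⟨v₀⟩
  choose! f hf using fun z (hz : z ≠ v₀) => hP.exists_isPrimParent hz
  have hfT : ∀ z ≠ v₀, s(f z, z) ∈ T.edgeSet := fun z hz => (hf z hz).mem_edgeSet hdistinct hT
  have hparent : IsParentTree T P f v₀ := ⟨hP.injective, hP.apply_seed_le,
    fun z hz => (hf z hz).lt,
    (isTreeOn_univ_iff.mp hT.2.1).edgeSet_eq_image_parent (fun z hz => (hf z hz).lt) hfT⟩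
  obtain ⟨b, hb, hbe⟩ := hparent.edgeSet_eq ▸ hmem
  rw [← hbe] at hmax ⊢
  have hcut : ∀ z, P b < P z → P b ≤ P (f z) := fun z hz =>
    have hz₀ : z ≠ v₀ := by rintro rfl; exact (hP.apply_seed_le b).not_gt hz
    (hf b hb).le_parent_of_weight_le hdistinct (hf z hz₀) (hmax _ (hfT z hz₀)) hz
  rw [edgeOrder_mk_of_lt (hf b hb).lt]
  exact hparent.exists_connectedComponents_deleteEdges hb hcut

theorem edge_sets_after_breaking_longest_mst_edge {V : Type*} [Fintype V] (G T : SimpleGraph V) (w : Sym2 V → ℝ)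
    (hconn : G.Connected) (hdistinct : Set.InjOn w G.edgeSet)
    (hT : IsMSTOn G w Set.univ T) (v₀ : V) (P : V → ℕ)
    (hP : IsPrimOrderOn G w Set.univ v₀ P)
    (vi vj : V) (hmem : s(vi, vj) ∈ T.edgeSet)
    (hmax : ∀ e ∈ T.edgeSet, w e ≤ w s(vi, vj)) :
    ∃ cL cR : (T.deleteEdges {s(vi, vj)}).ConnectedComponent,
      cL ≠ cR ∧ (∀ c, c = cL ∨ c = cR) ∧
      (restrictTo (T.deleteEdges {s(vi, vj)}) cL.supp).edgeSet
        = {e ∈ T.edgeSet | edgeOrder P e < edgeOrder P s(vi, vj)} ∧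
      (restrictTo (T.deleteEdges {s(vi, vj)}) cR.supp).edgeSet
        = {e ∈ T.edgeSet | edgeOrder P s(vi, vj) < edgeOrder P e} :=
  edge_sets_after_breaking_longest_mst_edge_general G T w hdistinct hT v₀ P hP vi vj hmem hmax
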